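/- Let τ > 0 and let q, p : ℝ → ℝ be differentiable functions satisfying q'(t+τ) + q'(t−τ) = p(t+τ) + p(t−τ) and p'(t+τ) + p'(t−τ) = −q(t+τ) − q(t−τ) for all t. Then I₂(t) = cos(t)·(p(t+τ) + p(t−τ)) + sin(t)·(q(t+τ) + q(t−τ)) is constant. -/

import Mathlib

/-! The symmetric shift sums `P t = p (t + τ) + p (t - τ)` and `Q t = q (t + τ) + q (t - τ)`
satisfy the harmonic oscillator system `Q' = P`, `P' = -Q`, so `(P, Q)` rotates with unit speed
and `cos t * P t + sin t * Q t` has derivative zero. -/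

open Real

theorem hasDerivAt_comp_add_add_comp_sub {g : ℝ → ℝ} {τ t : ℝ}
    (hplus : DifferentiableAt ℝ g (t + τ)) (hminus : DifferentiableAt ℝ g (t - τ)) :
    HasDerivAt (fun t => g (t + τ) + g (t - τ)) (deriv g (t + τ) + deriv g (t - τ)) t :=
  (hplus.hasDerivAt.comp_add_const t τ).add (hminus.hasDerivAt.comp_sub_const t τ)

theorem cos_mul_add_sin_mul_eq_of_hasDerivAt {P Q : ℝ → ℝ}
    (hP : ∀ t, HasDerivAt P (-Q t) t) (hQ : ∀ t, HasDerivAt Q (P t) t) (t s : ℝ) :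
    cos t * P t + sin t * Q t = cos s * P s + sin s * Q s := by
  have hderiv : ∀ x, HasDerivAt (fun x => cos x * P x + sin x * Q x) 0 x := fun x =>
    (((hasDerivAt_cos x).mul (hP x)).add ((hasDerivAt_sin x).mul (hQ x))).congr_deriv
      (by ring)
  exact is_const_of_deriv_eq_zero (fun x => (hderiv x).differentiableAt)
    (fun x => (hderiv x).deriv) t s

theorem stmt_13_general (τ : ℝ) (q p : ℝ → ℝ)
    (hq : Differentiable ℝ q) (hp : Differentiable ℝ p)
    (h1 : ∀ t : ℝ, deriv q (t + τ) + deriv q (t - τ) = p (t + τ) + p (t - τ))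
    (h2 : ∀ t : ℝ, deriv p (t + τ) + deriv p (t - τ) = -(q (t + τ)) - q (t - τ)) :
    ∀ t s : ℝ,
      Real.cos t * (p (t + τ) + p (t - τ)) + Real.sin t * (q (t + τ) + q (t - τ)) =
      Real.cos s * (p (s + τ) + p (s - τ)) + Real.sin s * (q (s + τ) + q (s - τ)) := by
  refine cos_mul_add_sin_mul_eq_of_hasDerivAt (fun t => ?_) (fun t => ?_)
  · have h := hasDerivAt_comp_add_add_comp_sub (hp (t + τ)) (hp (t - τ))
    rwa [h2 t, sub_eq_add_neg, ← neg_add] at h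
  · have h := hasDerivAt_comp_add_add_comp_sub (hq (t + τ)) (hq (t - τ))
    rwa [h1 t] at h

theorem stmt_13 (τ : ℝ) (hτ : 0 < τ) (q p : ℝ → ℝ)
    (hq : Differentiable ℝ q) (hp : Differentiable ℝ p)
    (h1 : ∀ t : ℝ, deriv q (t + τ) + deriv q (t - τ) = p (t + τ) + p (t - τ))
    (h2 : ∀ t : ℝ, deriv p (t + τ) + deriv p (t - τ) = -(q (t + τ)) - q (t - τ)) :
    ∀ t s : ℝ,
      Real.cos t * (p (t + τ) + p (t - τ)) + Real.sin t * (q (t + τ) + q (t - τ)) =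
      Real.cos s * (p (s + τ) + p (s - τ)) + Real.sin s * (q (s + τ) + q (s - τ)) :=
  stmt_13_general τ q p hq hp h1 h2
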